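/- arXiv:2106.09101 — 3 statements merged into one kernel-verified Lean document; each statement's English description precedes it below -/
import Mathlib

section
/- Let X be a Polish space, 2 ≤ k ≤ N, λ ∈ 𝒫_{1/N}(X), and x ∈ X. Then the mass that F_{N,k}(λ) assigns to the diagonal point (x,…,x) ∈ X^k factorizes as F_{N,k}(λ)({(x,…,x)}) = ( N^{k−1} / ∏_{j=1}^{k−1}(N−j) ) · λ({x}) · (λ({x}) − 1/N) · (λ({x}) − 2/N) ⋯ (λ({x}) − (k−1)/N). -/
open MeasureTheory Filter Topology ENNReal

noncomputable section

namespace FiniteDeFinetti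

variable {X : Type*}

/-- The symmetrization `S_N γ := (1/N!) ∑_{σ ∈ S_N} γ^σ` of a measure on `X^N`,
where `γ^σ` is the pushforward of `γ` under the coordinate permutation induced by `σ`. -/
def symmetrize [MeasurableSpace X] (N : ℕ) (γ : Measure (Fin N → X)) :
    Measure (Fin N → X) :=
  (N.factorial : ℝ≥0∞)⁻¹ • ∑ σ : Equiv.Perm (Fin N), γ.map (fun x i => x (σ i))

/-- The `k`-point marginal `M_k γ` of a measure on `X^N` (projection on the first `k` coords). -/
def marginal [MeasurableSpace X] {k N : ℕ} (h : k ≤ N) (γ : Measure (Fin N → X)) :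
    Measure (Fin k → X) :=
  γ.map (fun x i => x (Fin.castLE h i))

/-- `𝒫_sym(X^N)`: symmetric probability measures on `X^N`. -/
def PsymSet [MeasurableSpace X] (N : ℕ) : Set (Measure (Fin N → X)) :=
  {γ | IsProbabilityMeasure γ ∧ γ = symmetrize N γ}

/-- `𝒫_{N-rep}(X^k)`: the `N`-representable `k`-plans. -/
def NRep [MeasurableSpace X] {k N : ℕ} (h : k ≤ N) : Set (Measure (Fin k → X)) :=
  {μ | ∃ γ : Measure (Fin N → X), γ ∈ PsymSet N ∧ μ = marginal h γ}

/-- Narrow (weak) convergence of a sequence of measures: convergence of integrals of all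
bounded continuous functions. -/
def NarrowTendsto {Y : Type*} [MeasurableSpace Y] [TopologicalSpace Y]
    (μs : ℕ → Measure Y) (μ : Measure Y) : Prop :=
  ∀ φ : BoundedContinuousFunction Y ℝ,
    Tendsto (fun n => ∫ y, φ y ∂(μs n)) atTop (𝓝 (∫ y, φ y ∂μ))

/-- The empirical measure `(1/N) ∑ δ_{x_i}`. -/
def empirical [MeasurableSpace X] (N : ℕ) (x : Fin N → X) : Measure X :=
  (N : ℝ≥0∞)⁻¹ • ∑ i, Measure.dirac (x i)

/-- Extreme point of a convex set of measures. -/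
def IsExtremePt {Y : Type*} [MeasurableSpace Y] (C : Set (Measure Y)) (μ : Measure Y) : Prop :=
  μ ∈ C ∧ ∀ μ1 ∈ C, ∀ μ2 ∈ C, ∀ t : ℝ≥0∞, 0 < t → t < 1 →
    μ = t • μ1 + (1 - t) • μ2 → μ1 = μ ∧ μ2 = μ

/-- The set `E_{N,k}` of marginals of symmetrized Dirac measures. -/
def ENk [MeasurableSpace X] {k N : ℕ} (h : k ≤ N) : Set (Measure (Fin k → X)) :=
  {μ | ∃ x : Fin N → X, μ = marginal h (symmetrize N (Measure.dirac x))}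

/-- Borel σ-algebra on the space of probability measures with its narrow topology. -/
instance instMSPM {Y : Type*} [MeasurableSpace Y] [TopologicalSpace Y]
    [OpensMeasurableSpace Y] : MeasurableSpace (ProbabilityMeasure Y) := borel _

lemma empirical_isProbabilityMeasure [MeasurableSpace X] {N : ℕ} (hN : 0 < N) (x : Fin N → X) :
    IsProbabilityMeasure (empirical N x) := by
  constructor
  simp only [empirical, Measure.smul_apply, smul_eq_mul]
  rw [Measure.finset_sum_apply]
  simp only [measure_univ, Finset.sum_const, Finset.card_univ, Fintype.card_fin, nsmul_eq_mul,
    mul_one]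
  exact ENNReal.inv_mul_cancel (by exact_mod_cast hN.ne') (natCast_ne_top N)

/-- The empirical-measure map `Λ : X^N → 𝒫(X)`. -/
def empPM [MeasurableSpace X] {N : ℕ} (hN : 0 < N) (x : Fin N → X) : ProbabilityMeasure X :=
  ⟨empirical N x, empirical_isProbabilityMeasure hN x⟩

/-- The set `𝒫_{1/N}(X)` of `1/N`-quantized probability measures (as probability measures). -/
def QuantizedPM [MeasurableSpace X] (N : ℕ) : Set (ProbabilityMeasure X) :=
  {lam | ∃ x : Fin N → X, (lam : Measure X) = empirical N x}

open Classical in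
/-- The extremal `N`-representable `k`-plan `F_{N,k}(λ)` associated with a `1/N`-quantized
probability measure `λ = (1/N) ∑ δ_{x_i}`, namely `M_k S_N δ_{(x_1,…,x_N)}` (this does not
depend on the chosen enumeration of the atoms of `λ` counted with multiplicity); junk value
`λ^{⊗k}` for non-quantized `λ`. -/
def FNk [MeasurableSpace X] {k N : ℕ} (h : k ≤ N) (lam : ProbabilityMeasure X) :
    Measure (Fin k → X) :=
  if hx : ∃ x : Fin N → X, (lam : Measure X) = empirical N x then
    marginal h (symmetrize N (Measure.dirac (Classical.choose hx)))
  else Measure.pi fun _ => (lam : Measure X)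

/-!
Write `λ = (1/N) ∑ δ_{y i}` and `m = #{i | y i = x}`. The mass of `F_{N,k}(λ)` at `(x,…,x)` is
the proportion of permutations `σ` of `Fin N` with `y (σ i) = x` for all `i < k`. As `Perm (Fin N)`
acts transitively on the embeddings `Fin k ↪ Fin N`, each embedding is hit by equally many `σ`,
so this proportion is the fraction of embeddings landing in `{i | y i = x}`, i.e. the ratio of
falling factorials `m^(k) / N^(k)`. Since `λ{x} = m/N`, this is the claimed product.
-/

open Finset MulAction

section OrbitCounting

variable {G Y : Type*} [Group G] [Fintype G] [MulAction G Y] [DecidableEq Y]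

lemma card_filter_smul_eq_of_smul_eq {y₀ t : Y} {h : G} (ht : h • y₀ = t) :
    #{g : G | g • y₀ = t} = #{g : G | g • y₀ = y₀} := by
  refine card_nbij' (h⁻¹ * ·) (h * ·) ?_ ?_ ?_ ?_ <;> intro g hg <;>
    simp_all [mul_smul, inv_smul_eq_iff]

lemma card_filter_smul_mem_mul_card [Fintype Y] [IsPretransitive G Y] (y₀ : Y)
    (T : Finset Y) :
    #{g : G | g • y₀ ∈ T} * Fintype.card Y = #T * Fintype.card G := by
  have hfiber (t : Y) : #{g : G | g • y₀ = t} = #{g : G | g • y₀ = y₀} := by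
    obtain ⟨h, ht⟩ := exists_smul_eq G y₀ t
    exact card_filter_smul_eq_of_smul_eq ht
  have hT : #{g : G | g • y₀ ∈ T} = #T * #{g : G | g • y₀ = y₀} := by
    rw [card_eq_sum_card_fiberwise (s := {g : G | g • y₀ ∈ T}) (f := (· • y₀)) (t := T)
        (fun g hg => (mem_filter.1 hg).2),
      ← smul_eq_mul, ← sum_const]
    refine sum_congr rfl fun t ht => ?_
    rw [filter_filter, ← hfiber t]
    exact congrArg card (filter_congr fun g _ => ⟨And.right, fun hg => ⟨hg ▸ ht, hg⟩⟩)
  have hG : Fintype.card G = Fintype.card Y * #{g : G | g • y₀ = y₀} := by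
    rw [← card_univ, card_eq_sum_card_fiberwise (f := (· • y₀)) (t := univ)
      (fun _ _ => mem_univ _)]
    simp [hfiber]
  rw [hT, hG]; ring

end OrbitCounting

-- The decidability of the filter is a separate argument: on `Fin k`, `∀` is decided by
-- `Nat.decidableForallFin`, not by the generic `Fintype` instance.
lemma card_filter_embedding_forall {α β : Type*} [Fintype α] [Fintype β] (p : β → Prop)
    [DecidablePred p] [DecidablePred fun f : α ↪ β => ∀ a, p (f a)] :
    #{f : α ↪ β | ∀ a, p (f a)} = (#{b | p b}).descFactorial (Fintype.card α) := by
  rw [← Fintype.card_subtype, ← Fintype.card_subtype, ← Fintype.card_embedding_eq]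
  exact Fintype.card_congr
    { toFun := fun f => f.1.codRestrict _ f.2
      invFun := fun f => ⟨f.trans (Function.Embedding.subtype p), fun a => (f a).2⟩
      left_inv := fun f => rfl
      right_inv := fun f => rfl }

section Measures

variable [MeasurableSpace X]

lemma empirical_apply {N : ℕ} (y : Fin N → X) {s : Set X} (hs : MeasurableSet s)
    [DecidablePred (· ∈ s)] :
    empirical N y s = (N : ℝ≥0∞)⁻¹ * #{i | y i ∈ s} := by
  simp [empirical, Measure.finsetSum_apply, Measure.dirac_apply' _ hs, Set.indicator_apply,
    sum_boole]

lemma marginal_symmetrize_dirac_apply {k N : ℕ} (h : k ≤ N) (y : Fin N → X)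
    {s : Set (Fin k → X)} (hs : MeasurableSet s) [DecidablePred (· ∈ s)] :
    marginal h (symmetrize N (Measure.dirac y)) s =
      (N.factorial : ℝ≥0∞)⁻¹ *
        #{σ : Equiv.Perm (Fin N) | (fun i => y (σ (Fin.castLE h i))) ∈ s} := by
  have hproj : Measurable fun (z : Fin N → X) (i : Fin k) => z (Fin.castLE h i) := by fun_prop
  rw [marginal, Measure.map_apply hproj hs, symmetrize, Measure.smul_apply,
    Measure.finsetSum_apply]
  have hterm (σ : Equiv.Perm (Fin N)) :
      (Measure.dirac y).map (fun z i => z (σ i)) ((fun z i => z (Fin.castLE h i)) ⁻¹' s) =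
        if (fun i => y (σ (Fin.castLE h i))) ∈ s then 1 else 0 := by
    rw [Measure.map_dirac' (by fun_prop), Measure.dirac_apply' _ (hproj hs)]
    by_cases hσ : (fun i => y (σ (Fin.castLE h i))) ∈ s <;> simp [hσ]
  simp only [hterm, sum_boole, smul_eq_mul]

lemma empirical_singleton_toReal [MeasurableSingletonClass X] {N : ℕ} (y : Fin N → X)
    (x : X) [DecidableEq X] :
    (empirical N y {x}).toReal = (#{i | y i = x} : ℝ) / N := by
  rw [empirical_apply y (measurableSet_singleton x)]
  simp [div_eq_inv_mul]

lemma marginal_symmetrize_dirac_diagonal_toReal [MeasurableSingletonClass X] {k N : ℕ}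
    (h : k ≤ N) (y : Fin N → X) (x : X) [DecidableEq X] :
    (marginal h (symmetrize N (Measure.dirac y)) {fun _ => x}).toReal =
      ((#{i | y i = x}).descFactorial k : ℝ) / N.descFactorial k := by
  have : IsPretransitive (Equiv.Perm (Fin N)) (Fin k ↪ Fin N) :=
    ⟨Equiv.Perm.exists_smul_eq_embedding⟩
  have hcount := card_filter_smul_mem_mul_card (G := Equiv.Perm (Fin N)) (Fin.castLEEmb h)
    {f : Fin k ↪ Fin N | ∀ i, y (f i) = x}
  rw [card_filter_embedding_forall (fun b => y b = x), Fintype.card_embedding_eq,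
    Fintype.card_perm, Fintype.card_fin, Fintype.card_fin] at hcount
  have hN : (N.descFactorial k : ℝ) ≠ 0 := by exact_mod_cast (Nat.descFactorial_pos.2 h).ne'
  rw [marginal_symmetrize_dirac_apply h y (measurableSet_singleton _), toReal_mul,
    toReal_inv, toReal_natCast, toReal_natCast, inv_mul_eq_div,
    div_eq_div_iff (by positivity) hN]
  norm_cast
  convert hcount using 3
  ext σ
  simp [funext_iff]

end Measures

lemma exists_FNk_eq_of_mem_QuantizedPM [MeasurableSpace X] {k N : ℕ} (h : k ≤ N)
    {lam : ProbabilityMeasure X} (hlam : lam ∈ QuantizedPM N) :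
    ∃ y : Fin N → X, (lam : Measure X) = empirical N y ∧
      FNk h lam = marginal h (symmetrize N (Measure.dirac y)) :=
  ⟨_, hlam.choose_spec, dif_pos hlam⟩

lemma cast_descFactorial_div_descFactorial {k N : ℕ} (h : k ≤ N) (m : ℕ) :
    (m.descFactorial k : ℝ) / N.descFactorial k =
      ((N : ℝ) ^ (k - 1) / ∏ j ∈ Icc 1 (k - 1), ((N : ℝ) - j)) *
        ∏ j ∈ range k, ((m : ℝ) / N - j / N) := by
  cases k with
  | zero => simp
  | succ k =>
    have hN : (N : ℝ) ≠ 0 := Nat.cast_ne_zero.2 (by omega)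
    have hIcc :
        ∏ j ∈ Icc 1 k, ((N : ℝ) - j) = ∏ j ∈ range k, ((N : ℝ) - (j + 1 : ℕ)) := by
      rw [← Ico_add_one_right_eq_Icc, prod_Ico_eq_prod_range, Nat.add_sub_cancel]
      simp [add_comm]
    simp_rw [← descPochhammer_eval_eq_descFactorial ℝ, descPochhammer_eval_eq_prod_range,
      div_sub_div_same, Finset.prod_div_distrib, prod_const, card_range]
    rw [Nat.add_sub_cancel, prod_range_succ' (fun j : ℕ => (N : ℝ) - j), hIcc, Nat.cast_zero,
      sub_zero]
    field_simp
    ring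

theorem FNk_diagonal_factorization_general
    {X : Type*} [MeasurableSpace X] [TopologicalSpace X] [PolishSpace X] [BorelSpace X]
    {k N : ℕ} (hkN : k ≤ N)
    (lam : ProbabilityMeasure X) (hlam : lam ∈ QuantizedPM (X := X) N) (x : X) :
    ((FNk (X := X) hkN lam) {fun _ : Fin k => x}).toReal
      = ((N : ℝ) ^ (k - 1) / ∏ j ∈ Finset.Icc 1 (k - 1), ((N : ℝ) - (j : ℝ))) *
          ∏ j ∈ Finset.range k, (((lam : Measure X) {x}).toReal - (j : ℝ) / (N : ℝ)) := by
  classical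
  obtain ⟨y, hlam_eq, hF⟩ := exists_FNk_eq_of_mem_QuantizedPM hkN hlam
  rw [hF, marginal_symmetrize_dirac_diagonal_toReal, hlam_eq, empirical_singleton_toReal]
  exact cast_descFactorial_div_descFactorial hkN _

/-- factorization on the diagonal. For `2 ≤ k ≤ N`, `λ ∈ 𝒫_{1/N}(X)` and
`x ∈ X`, `F_{N,k}(λ)({(x,…,x)}) = (N^{k−1}/∏_{j=1}^{k−1}(N−j)) · λ({x})·(λ({x})−1/N)⋯(λ({x})−(k−1)/N)`. -/
theorem FNk_diagonal_factorization
    {X : Type*} [MeasurableSpace X] [TopologicalSpace X] [PolishSpace X] [BorelSpace X]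
    {k N : ℕ} (hk : 2 ≤ k) (hkN : k ≤ N)
    (lam : ProbabilityMeasure X) (hlam : lam ∈ QuantizedPM (X := X) N) (x : X) :
    ((FNk (X := X) hkN lam) {fun _ : Fin k => x}).toReal
      = ((N : ℝ) ^ (k - 1) / ∏ j ∈ Finset.Icc 1 (k - 1), ((N : ℝ) - (j : ℝ))) *
          ∏ j ∈ Finset.range k, (((lam : Measure X) {x}).toReal - (j : ℝ) / (N : ℝ)) :=
  FNk_diagonal_factorization_general hkN lam hlam x

end FiniteDeFinetti
end
end

section
/- Let X be a Polish space and 2 ≤ k ≤ N. For every (x_1,…,x_N) ∈ X^N, setting μ_k := M_k S_N δ_{(x_1,…,x_N)} and λ := (1/N) Σ_{i=1}^N δ_{x_i}, one has the total variation bound ‖ ( ∏_{j=1}^{k−1}(N−j) / N^{k−1} ) · μ_k − λ^{⊗k} ‖_TV ≤ C_k / N, where C_k := Σ_{j=1}^{k−1} c_j^{(k)} and c_j^{(k)} := Σ_{1 ≤ i_1 < ⋯ < i_j ≤ k−1} i_1 · i_2 ⋯ i_j is the j-th elementary symmetric polynomial of 1, 2, …, k−1; in particular C_k is independent of N and of X.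 -/
open MeasureTheory Filter Topology ENNReal

noncomputable section

namespace FiniteDeFinetti

variable {X : Type*}

/-!
Write `μ_k` as the law of `(x_{σ 0}, …, x_{σ (k-1)})` for a uniform permutation `σ` and
`λ^{⊗k}` as the law of `(x_{f 0}, …, x_{f (k-1)})` for a uniform map `f : Fin k → Fin N`.
Each injective `f` is the restriction of exactly `(N-k)!` permutations, so
`α • μ_k ≤ λ^{⊗k}` with `α = N (N-1) ⋯ (N-k+1) / N^k`, the probability that `f` is injective.
For probability measures, `c • μ ≤ ν` gives `|c μ(A) - ν(A)| ≤ 1 - c` (compare on `A` and on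
`Aᶜ`), and `1 - α = 1 - ∏_{j<k} (1 - j/N) ≤ ∑_{j<k} j/N = c_1^{(k)}/N ≤ C_k/N`.
-/

open Finset

theorem one_sub_prod_one_sub_le_sum {ι R : Type*} [CommRing R] [LinearOrder R]
    [IsStrictOrderedRing R] (s : Finset ι) {a : ι → R} (h0 : ∀ i ∈ s, 0 ≤ a i)
    (h1 : ∀ i ∈ s, a i ≤ 1) :
    1 - ∏ i ∈ s, (1 - a i) ≤ ∑ i ∈ s, a i := by
  classical
  induction s using Finset.induction_on with
  | empty => simp
  | insert j s hj ih =>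
    rw [prod_insert hj, sum_insert hj]
    have hP0 : 0 ≤ ∏ i ∈ s, (1 - a i) :=
      prod_nonneg fun i hi => sub_nonneg.2 (h1 i (mem_insert_of_mem hi))
    have hP1 : ∏ i ∈ s, (1 - a i) ≤ 1 :=
      prod_le_one (fun i hi => sub_nonneg.2 (h1 i (mem_insert_of_mem hi)))
        fun i hi => sub_le_self _ (h0 i (mem_insert_of_mem hi))
    have := ih (fun i hi => h0 i (mem_insert_of_mem hi)) fun i hi => h1 i (mem_insert_of_mem hi)
    nlinarith [h0 j (mem_insert_self j s)]

theorem sum_le_sum_sum_powersetCard_prod {ι R : Type*} [CommSemiring R] [PartialOrder R]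
    [IsOrderedRing R] (s : Finset ι) (f : ι → R) (hf : ∀ i ∈ s, 0 ≤ f i) {J : Finset ℕ}
    (hJ : 1 ∈ J) :
    ∑ i ∈ s, f i ≤ ∑ j ∈ J, ∑ t ∈ powersetCard j s, ∏ i ∈ t, f i := by
  have hone : ∑ t ∈ powersetCard 1 s, ∏ i ∈ t, f i = ∑ i ∈ s, f i := by
    simp [powersetCard_one]
  rw [← hone]
  refine single_le_sum (f := fun j => ∑ t ∈ powersetCard j s, ∏ i ∈ t, f i)
    (fun _ _ => sum_nonneg fun t ht => prod_nonneg fun i hi => ?_) hJ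
  exact hf i ((mem_powersetCard.1 ht).1 hi)

theorem natCast_mul_prod_Icc_sub {N m : ℕ} (h : m < N) :
    (N : ℝ) * ∏ j ∈ Icc 1 m, ((N : ℝ) - j) = N.descFactorial (m + 1) := by
  induction m with
  | zero => simp
  | succ m ih =>
    rw [prod_Icc_succ_top (by omega), Nat.descFactorial_succ, ← mul_assoc, ih (by omega),
      Nat.cast_mul, Nat.cast_sub h.le]
    push_cast
    ring

theorem descFactorial_div_pow_mul_inv_factorial_mul_factorial {k N : ℕ} (h : k ≤ N) :
    (N.descFactorial k : ℝ≥0∞) / N ^ k * (N.factorial : ℝ≥0∞)⁻¹ * (N - k).factorial =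
      ((N : ℝ≥0∞) ^ k)⁻¹ := by
  have hfac : ((N - k).factorial : ℝ≥0∞) * N.descFactorial k = N.factorial := by
    exact_mod_cast Nat.factorial_mul_descFactorial h
  have hd : (N.descFactorial k : ℝ≥0∞) ≠ 0 := by
    exact_mod_cast (Nat.descFactorial_pos.2 h).ne'
  have hf : ((N - k).factorial : ℝ≥0∞) ≠ 0 := by exact_mod_cast (N - k).factorial_ne_zero
  rw [← hfac, ENNReal.mul_inv (Or.inl hf) (Or.inl (ENNReal.natCast_ne_top _)), div_eq_mul_inv]
  calc _ = ((N : ℝ≥0∞) ^ k)⁻¹ * (N.descFactorial k * (N.descFactorial k : ℝ≥0∞)⁻¹)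
        * ((N - k).factorial * ((N - k).factorial : ℝ≥0∞)⁻¹) := by ring
    _ = _ := by
      rw [ENNReal.mul_inv_cancel hd (ENNReal.natCast_ne_top _),
        ENNReal.mul_inv_cancel hf (ENNReal.natCast_ne_top _), mul_one, mul_one]

theorem toReal_descFactorial_div_pow {k N : ℕ} (hk : 0 < k) (hkN : k ≤ N) :
    ((N.descFactorial k : ℝ≥0∞) / N ^ k).toReal =
      (∏ j ∈ Icc 1 (k - 1), ((N : ℝ) - j)) / (N : ℝ) ^ (k - 1) := by
  obtain ⟨m, rfl⟩ : ∃ m, k = m + 1 := ⟨k - 1, by omega⟩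
  have hN : (N : ℝ) ≠ 0 := by exact_mod_cast (show N ≠ 0 by omega)
  rw [ENNReal.toReal_div, ENNReal.toReal_pow, ENNReal.toReal_natCast, ENNReal.toReal_natCast,
    ← natCast_mul_prod_Icc_sub (by omega), Nat.add_sub_cancel, pow_succ]
  field_simp

theorem one_sub_prod_Icc_sub_div_pow_le {k N : ℕ} (hk : 2 ≤ k) (hkN : k ≤ N) :
    1 - (∏ j ∈ Icc 1 (k - 1), ((N : ℝ) - j)) / (N : ℝ) ^ (k - 1) ≤
      (∑ j ∈ Icc 1 (k - 1),
        ∑ s ∈ powersetCard j (Icc 1 (k - 1)), ∏ i ∈ s, (i : ℝ)) / N := by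
  have hN : (N : ℝ) ≠ 0 := by exact_mod_cast (show N ≠ 0 by omega)
  have hprod : (∏ j ∈ Icc 1 (k - 1), ((N : ℝ) - j)) / (N : ℝ) ^ (k - 1) =
      ∏ j ∈ Icc 1 (k - 1), (1 - (j : ℝ) / N) := by
    rw [eq_comm]
    calc ∏ j ∈ Icc 1 (k - 1), (1 - (j : ℝ) / N) = ∏ j ∈ Icc 1 (k - 1), (((N : ℝ) - j) / N) :=
          prod_congr rfl fun j _ => by rw [sub_div, div_self hN]
      _ = _ := by rw [Finset.prod_div_distrib, prod_const, Nat.card_Icc, Nat.add_sub_cancel]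
  rw [hprod]
  calc 1 - ∏ j ∈ Icc 1 (k - 1), (1 - (j : ℝ) / N)
        ≤ ∑ j ∈ Icc 1 (k - 1), (j : ℝ) / N :=
        one_sub_prod_one_sub_le_sum _ (fun j _ => by positivity) fun j hj => by
          rw [div_le_one (by positivity)]
          exact_mod_cast ((mem_Icc.1 hj).2.trans (Nat.sub_le k 1)).trans hkN
    _ = (∑ j ∈ Icc 1 (k - 1), (j : ℝ)) / N := by rw [sum_div]
    _ ≤ _ := div_le_div_of_nonneg_right (sum_le_sum_sum_powersetCard_prod _ _
        (fun _ _ => Nat.cast_nonneg _) (mem_Icc.2 ⟨le_rfl, by omega⟩)) (Nat.cast_nonneg N)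

theorem card_perm_fixing_val_lt {k N : ℕ} (h : k ≤ N) :
    Fintype.card {τ : Equiv.Perm (Fin N) // ∀ a : Fin N, (a : ℕ) < k → τ a = a} =
      (N - k).factorial := by
  rw [← Fintype.card_congr
      ((Equiv.Perm.subtypeEquivSubtypePerm fun a : Fin N => ¬ (a : ℕ) < k).trans
        (Equiv.subtypeEquivRight fun τ => by simp only [not_not])), Fintype.card_perm,
    Fintype.card_subtype_compl, Fintype.card_fin_lt_of_le h, Fintype.card_fin]

theorem card_filter_perm_comp_castLE_le {k N : ℕ} (h : k ≤ N) (b : Fin k → Fin N) :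
    #{σ : Equiv.Perm (Fin N) | (fun i => σ (Fin.castLE h i)) = b} ≤ (N - k).factorial := by
  obtain hempty | ⟨σ₀, hσ₀⟩ :=
    ({σ : Equiv.Perm (Fin N) | (fun i => σ (Fin.castLE h i)) = b} : Finset _).eq_empty_or_nonempty
  · simp [hempty]
  -- the fibre over `b` is a left coset of the pointwise stabiliser of `{0, …, k-1}`
  rw [← card_perm_fixing_val_lt h, Fintype.card_subtype]
  refine card_le_card_of_injOn (σ₀⁻¹ * ·) (fun σ hσ => ?_) fun σ _ τ _ => mul_left_cancel
  simp only [coe_filter, mem_filter, mem_univ, true_and, Set.mem_ofPred_eq] at hσ hσ₀ ⊢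
  intro a ha
  have := congrFun (hσ.trans hσ₀.symm) ⟨a, ha⟩
  simp only [Fin.castLE_mk, Fin.eta] at this
  simp [Equiv.Perm.mul_apply, this]

theorem sum_perm_comp_castLE_le {M : Type*} [AddCommMonoid M] [PartialOrder M]
    [IsOrderedAddMonoid M] {k N : ℕ} (h : k ≤ N) (g : (Fin k → Fin N) → M) (hg : 0 ≤ g) :
    ∑ σ : Equiv.Perm (Fin N), g (fun i => σ (Fin.castLE h i)) ≤
      (N - k).factorial • ∑ f, g f := by
  rw [← sum_fiberwise univ (fun σ : Equiv.Perm (Fin N) => fun i => σ (Fin.castLE h i)),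
    smul_sum]
  refine sum_le_sum fun b _ => ?_
  rw [sum_congr rfl fun σ hσ => congrArg g (mem_filter.1 hσ).2, sum_const]
  exact nsmul_le_nsmul_left (hg b) (card_filter_perm_comp_castLE_le h b)

theorem abs_toReal_mul_measureReal_sub_le {Y : Type*} [MeasurableSpace Y] {μ ν : Measure Y}
    [IsProbabilityMeasure μ] [IsProbabilityMeasure ν] {c : ℝ≥0∞} (h : c • μ ≤ ν)
    {A : Set Y} (hA : MeasurableSet A) :
    |c.toReal * μ.real A - ν.real A| ≤ 1 - c.toReal := by
  have hle (B : Set Y) : c.toReal * μ.real B ≤ ν.real B := by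
    rw [measureReal_def, measureReal_def, ← ENNReal.toReal_mul]
    exact ENNReal.toReal_mono (measure_ne_top ν B) (h B)
  have hc : c.toReal ≤ 1 := by simpa using hle Set.univ
  have hcompl := hle Aᶜ
  rw [probReal_compl_eq_one_sub hA, probReal_compl_eq_one_sub hA] at hcompl
  rw [abs_le]
  constructor <;> linarith [hle A]

theorem pi_smul_sum_dirac {ι κ Y : Type*} [Fintype ι] [DecidableEq ι] [Fintype κ]
    [MeasurableSpace Y] {c : ℝ≥0∞} (hc : c ≠ ∞) (y : κ → Y) :
    Measure.pi (fun _ : ι => c • ∑ j, Measure.dirac (y j)) =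
      c ^ Fintype.card ι • ∑ f : ι → κ, Measure.dirac fun i => y (f i) := by
  have := Measure.smul_finite (∑ j, Measure.dirac (y j)) hc
  refine Measure.pi_eq fun s hs => ?_
  simp only [Measure.smul_apply, Measure.finsetSum_apply, smul_eq_mul,
    Measure.dirac_apply' _ (MeasurableSet.univ_pi hs), Measure.dirac_apply' _ (hs _),
    prod_mul_distrib, prod_const, card_univ, Fintype.prod_sum]
  congr 1
  refine sum_congr rfl fun f _ => ?_
  by_cases hf : ∀ i, y (f i) ∈ s i
  · simp [hf]
  · obtain ⟨i, hi⟩ := not_forall.1 hf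
    rw [Set.indicator_of_notMem (by simpa using hf), eq_comm]
    exact prod_eq_zero (mem_univ i) (Set.indicator_of_notMem hi _)

section Measures

variable [MeasurableSpace X]

instance isProbabilityMeasure_symmetrize (N : ℕ) (γ : Measure (Fin N → X))
    [IsProbabilityMeasure γ] : IsProbabilityMeasure (symmetrize N γ) := by
  constructor
  have hperm (σ : Equiv.Perm (Fin N)) : Measurable fun (y : Fin N → X) i => y (σ i) := by
    fun_prop
  simp only [symmetrize, Measure.smul_apply, Measure.finsetSum_apply, smul_eq_mul,
    Measure.map_apply (hperm _) MeasurableSet.univ, Set.preimage_univ, measure_univ, sum_const,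
    card_univ, Fintype.card_perm, Fintype.card_fin, nsmul_eq_mul, mul_one]
  exact ENNReal.inv_mul_cancel (by exact_mod_cast N.factorial_ne_zero) (ENNReal.natCast_ne_top _)

instance isProbabilityMeasure_marginal {k N : ℕ} (h : k ≤ N) (γ : Measure (Fin N → X))
    [IsProbabilityMeasure γ] : IsProbabilityMeasure (marginal h γ) :=
  Measure.isProbabilityMeasure_map (by fun_prop : Measurable _).aemeasurable

theorem marginal_symmetrize_dirac {k N : ℕ} (h : k ≤ N) (x : Fin N → X) :
    marginal h (symmetrize N (Measure.dirac x)) =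
      (N.factorial : ℝ≥0∞)⁻¹ • ∑ σ : Equiv.Perm (Fin N),
        Measure.dirac fun i => x (σ (Fin.castLE h i)) := by
  have hperm (σ : Equiv.Perm (Fin N)) : Measurable fun (y : Fin N → X) i => y (σ i) := by
    fun_prop
  have hproj : Measurable fun (y : Fin N → X) (i : Fin k) => y (Fin.castLE h i) := by fun_prop
  simp only [marginal, symmetrize, Measure.map_smul, Measure.map_dirac' (hperm _),
    Measure.map_finset_sum hproj.aemeasurable, Measure.map_dirac' hproj]

theorem pi_empirical {k N : ℕ} (hN : N ≠ 0) (x : Fin N → X) :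
    Measure.pi (fun _ : Fin k => empirical N x) =
      ((N : ℝ≥0∞) ^ k)⁻¹ • ∑ f : Fin k → Fin N, Measure.dirac fun i => x (f i) := by
  rw [empirical, pi_smul_sum_dirac (ENNReal.inv_ne_top.2 (Nat.cast_ne_zero.2 hN)),
    Fintype.card_fin, ENNReal.inv_pow]

theorem smul_marginal_symmetrize_dirac_le_pi_empirical {k N : ℕ} (h : k ≤ N) (hN : N ≠ 0)
    (x : Fin N → X) :
    ((N.descFactorial k : ℝ≥0∞) / N ^ k) • marginal h (symmetrize N (Measure.dirac x)) ≤
      Measure.pi fun _ : Fin k => empirical N x := by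
  rw [marginal_symmetrize_dirac, pi_empirical hN,
    ← descFactorial_div_pow_mul_inv_factorial_mul_factorial h, mul_smul, mul_smul,
    Nat.cast_smul_eq_nsmul]
  gcongr
  exact sum_perm_comp_castLE_le h (fun f => Measure.dirac fun i => x (f i))
    fun _ => Measure.zero_le _

end Measures

theorem tv_bound_mean_field_general
    {X : Type*} [MeasurableSpace X]
    {k N : ℕ} (hk : 2 ≤ k) (hkN : k ≤ N) (x : Fin N → X) :
    ∀ A : Set (Fin k → X), MeasurableSet A →
      |(∏ j ∈ Finset.Icc 1 (k - 1), ((N : ℝ) - (j : ℝ))) / (N : ℝ) ^ (k - 1) *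
            ((marginal hkN (symmetrize N (Measure.dirac x))) A).toReal
          - ((Measure.pi fun _ : Fin k => empirical N x) A).toReal|
        ≤ (∑ j ∈ Finset.Icc 1 (k - 1),
            ∑ s ∈ Finset.powersetCard j (Finset.Icc 1 (k - 1)), ∏ i ∈ s, (i : ℝ)) / (N : ℝ) := by
  intro A hA
  have hN : N ≠ 0 := by omega
  have := empirical_isProbabilityMeasure (Nat.pos_of_ne_zero hN) x
  have hα := toReal_descFactorial_div_pow (by omega) hkN
  have hTV := abs_toReal_mul_measureReal_sub_le
    (smul_marginal_symmetrize_dirac_le_pi_empirical hkN hN x) hA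
  rw [hα] at hTV
  exact hTV.trans (one_sub_prod_Icc_sub_div_pow_le hk hkN)

/-- mean-field approximation of extreme points, total variation bound.
For `2 ≤ k ≤ N`, `μ_k = M_k S_N δ_{(x_1,…,x_N)}` and `λ = (1/N) ∑ δ_{x_i}`:
`‖(∏_{j=1}^{k−1}(N−j)/N^{k−1}) μ_k − λ^{⊗k}‖_TV ≤ C_k/N`, with
`C_k = ∑_{j=1}^{k−1} c_j^{(k)}` and `c_j^{(k)} = ∑_{1≤i_1<⋯<i_j≤k−1} i_1⋯i_j`; the TV norm
is formalized as the supremum over Borel sets `A` of the discrepancy at `A`. -/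
theorem tv_bound_mean_field
    {X : Type*} [MeasurableSpace X] [TopologicalSpace X] [PolishSpace X] [BorelSpace X]
    {k N : ℕ} (hk : 2 ≤ k) (hkN : k ≤ N) (x : Fin N → X) :
    ∀ A : Set (Fin k → X), MeasurableSet A →
      |(∏ j ∈ Finset.Icc 1 (k - 1), ((N : ℝ) - (j : ℝ))) / (N : ℝ) ^ (k - 1) *
            ((marginal hkN (symmetrize N (Measure.dirac x))) A).toReal
          - ((Measure.pi fun _ : Fin k => empirical N x) A).toReal|
        ≤ (∑ j ∈ Finset.Icc 1 (k - 1),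
            ∑ s ∈ Finset.powersetCard j (Finset.Icc 1 (k - 1)), ∏ i ∈ s, (i : ℝ)) / (N : ℝ) :=
  tv_bound_mean_field_general hk hkN x
end FiniteDeFinetti
end
end

section
/- Let X be a Polish space, 2 ≤ k ≤ N, and let Φ : X^k → ℝ be bounded, continuous, and symmetric (invariant under permutations of its k arguments). Define C_{N,k}(ρ) := inf { ∫_{X^k} Φ dμ_k : μ_k ∈ 𝒫_{N-rep}(X^k), M_1 μ_k = ρ } for ρ ∈ 𝒫(X), define P_k(λ) := ∫_{X^k} Φ dλ^{⊗k}, and define the convexification P_k^{**}(ρ) := inf { ∫_{𝒫(X)} P_k(λ) dα(λ) : α ∈ 𝒫(𝒫(X)), ∫_{𝒫(X)} λ dα(λ) = ρ }, where the barycenter constraint means ∫_{𝒫(X)} λ(A) dα(λ) = ρ(A) for all Borel A ⊆ X. Then for all ρ ∈ 𝒫(X): ((N−k)! N^k / N!) · ( P_k^{**}(ρ) − C_k ‖Φ‖_∞ / N ) ≤ C_{N,k}(ρ) ≤ P_k^{**}(ρ), where C_k := Σ_{j=1}^{k−1} Σ_{1 ≤ i_1 < ⋯ < i_j ≤ k−1}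 i_1⋯i_j depends only on k. In particular C_{N,k} converges uniformly on 𝒫(X) to P_k^{**} as N → ∞. -/
open MeasureTheory Filter Topology ENNReal
open scoped BoundedContinuousFunction NNReal

noncomputable section

namespace FiniteDeFinetti

variable {X : Type*}

/-- The one-point marginal `M_1 μ` of a measure on `X^k`. -/
def margOne [MeasurableSpace X] {k : ℕ} (hk : 0 < k) (μ : Measure (Fin k → X)) : Measure X :=
  μ.map (fun f => f ⟨0, hk⟩)

section MeasHelpers

variable {Y Z : Type*} [MeasurableSpace Y] [MeasurableSpace Z]

lemma measurable_permApply {n : ℕ} (σ : Equiv.Perm (Fin n)) :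
    Measurable (fun (x : Fin n → Y) (i : Fin n) => x (σ i)) :=
  measurable_pi_lambda _ fun i => measurable_pi_apply _

lemma map_finset_sum {ι : Type*} (s : Finset ι) (μ : ι → Measure Y) {f : Y → Z}
    (hf : Measurable f) :
    (∑ i ∈ s, μ i).map f = ∑ i ∈ s, (μ i).map f := by
  ext t ht
  rw [Measure.map_apply hf ht, Measure.finset_sum_apply, Measure.finset_sum_apply]
  simp_rw [Measure.map_apply hf ht]

lemma map_comp_perm {n : ℕ} (m : Measure Y) [SigmaFinite m] (σ : Equiv.Perm (Fin n)) :
    (Measure.pi fun _ : Fin n => m).map (fun x i => x (σ i)) = Measure.pi fun _ : Fin n => m := by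
  refine (Measure.pi_eq fun s hs => ?_).symm
  rw [Measure.map_apply (measurable_permApply σ) (MeasurableSet.univ_pi hs)]
  have : (fun (x : Fin n → Y) (i : Fin n) => x (σ i)) ⁻¹' Set.pi Set.univ s
      = Set.pi Set.univ (fun j => s (σ.symm j)) := by
    ext x
    simp only [Set.mem_preimage, Set.mem_univ_pi]
    constructor
    · intro h j; simpa using h (σ.symm j)
    · intro h i; simpa using h (σ i)
  rw [this, Measure.pi_pi]
  exact Equiv.prod_comp σ.symm fun i => m (s i)

lemma symmetrize_eq_self {n : ℕ} {γ : Measure (Fin n → Y)}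
    (h : ∀ σ : Equiv.Perm (Fin n), γ.map (fun x i => x (σ i)) = γ) :
    symmetrize n γ = γ := by
  unfold symmetrize
  simp only [h, Finset.sum_const, Finset.card_univ]
  rw [Fintype.card_perm, Fintype.card_fin]
  rw [← Nat.cast_smul_eq_nsmul (R := ℝ≥0∞), smul_smul,
    ENNReal.inv_mul_cancel (by exact_mod_cast n.factorial_ne_zero) (natCast_ne_top _), one_smul]

lemma map_perm_of_mem_psym {n : ℕ} {γ : Measure (Fin n → Y)} (hγ : γ ∈ PsymSet n)
    (τ : Equiv.Perm (Fin n)) :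
    γ.map (fun x i => x (τ i)) = γ := by
  conv_lhs => rw [hγ.2]
  conv_rhs => rw [hγ.2]
  unfold symmetrize
  rw [Measure.map_smul, map_finset_sum _ _ (measurable_permApply τ)]
  congr 1
  have key : ∀ σ : Equiv.Perm (Fin n),
      (γ.map fun x i => x (σ i)).map (fun x i => x (τ i))
        = γ.map (fun x i => x ((σ * τ) i)) := by
    intro σ
    rw [Measure.map_map (measurable_permApply τ) (measurable_permApply σ)]
    rfl
  simp_rw [key]
  exact Equiv.sum_comp (Equiv.mulRight τ) (fun σ => γ.map (fun x i => x (σ i)))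


lemma pi_map_castLE (m : Measure Y) [IsProbabilityMeasure m] {k N : ℕ} (h : k ≤ N) :
    (Measure.pi fun _ : Fin N => m).map (fun x (i : Fin k) => x (Fin.castLE h i))
      = Measure.pi fun _ : Fin k => m := by
  refine (Measure.pi_eq fun s hs => ?_).symm
  have hmeas : Measurable (fun (x : Fin N → Y) (i : Fin k) => x (Fin.castLE h i)) :=
    measurable_pi_lambda _ fun i => measurable_pi_apply _
  rw [Measure.map_apply hmeas (MeasurableSet.univ_pi hs)]
  classical
  have hpre : (fun (x : Fin N → Y) (i : Fin k) => x (Fin.castLE h i)) ⁻¹' Set.pi Set.univ s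
      = Set.pi Set.univ (fun j : Fin N => if hj : (j : ℕ) < k then s ⟨j, hj⟩ else Set.univ) := by
    ext x
    simp only [Set.mem_preimage, Set.mem_univ_pi]
    constructor
    · intro hx j
      by_cases hj : (j : ℕ) < k
      · simpa [hj] using hx ⟨j, hj⟩
      · simp [hj]
    · intro hx i
      have := hx (Fin.castLE h i)
      simpa [i.isLt] using this
  rw [hpre, Measure.pi_pi]
  have : ∀ j : Fin N, m (if hj : (j : ℕ) < k then s ⟨j, hj⟩ else Set.univ)
      = (fun t : ℕ => if ht : t < k then m (s ⟨t, ht⟩) else 1) (j : ℕ) := by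
    intro j
    by_cases hj : (j : ℕ) < k <;> simp [hj]
  simp_rw [this]
  rw [Fin.prod_univ_eq_prod_range (fun t => if ht : t < k then m (s ⟨t, ht⟩) else 1) N]
  rw [← Finset.prod_range_mul_prod_Ico (fun t => if ht : t < k then m (s ⟨t, ht⟩) else 1) h]
  have h2 : ∀ t ∈ Finset.Ico k N, (if ht : t < k then m (s ⟨t, ht⟩) else 1) = 1 := by
    intro t ht
    rw [Finset.mem_Ico] at ht
    simp [Nat.not_lt.mpr ht.1]
  rw [Finset.prod_congr rfl h2, Finset.prod_const_one, mul_one]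
  rw [← Fin.prod_univ_eq_prod_range (fun t => if ht : t < k then m (s ⟨t, ht⟩) else 1) k]
  exact Finset.prod_congr rfl (fun i _ => by simp [i.isLt])

lemma pi_map_eval (m : Measure Y) [IsProbabilityMeasure m] {k : ℕ} (i : Fin k) :
    (Measure.pi fun _ : Fin k => m).map (fun x => x i) = m := by
  ext A hA
  rw [Measure.map_apply (measurable_pi_apply i) hA]
  classical
  have hpre : (fun x : Fin k → Y => x i) ⁻¹' A
      = Set.pi Set.univ (fun j : Fin k => if j = i then A else Set.univ) := by
    ext x
    simp only [Set.mem_preimage, Set.mem_univ_pi]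
    constructor
    · intro hx j; by_cases hj : j = i <;> simp [hj, hx]
    · intro hx; simpa using hx i
  rw [hpre, Measure.pi_pi]
  rw [Finset.prod_eq_single i (fun j _ hj => by simp [hj]) (by simp)]
  simp


lemma exists_perm_extend {k N : ℕ} (h : k ≤ N) {v : Fin k → Fin N} (hv : Function.Injective v) :
    ∃ σ : Equiv.Perm (Fin N), ∀ i : Fin k, σ (Fin.castLE h i) = v i := by
  classical
  let e1 : {x : Fin N // (x : ℕ) < k} ≃ Fin k :=
    { toFun := fun x => ⟨(x.1 : ℕ), x.2⟩
      invFun := fun i => ⟨Fin.castLE h i, i.isLt⟩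
      left_inv := fun x => by ext; rfl
      right_inv := fun i => by ext; rfl }
  let e2 : Fin k ≃ {x : Fin N // x ∈ Set.range v} := Equiv.ofInjective v hv
  let e : {x : Fin N // (x : ℕ) < k} ≃ {x : Fin N // x ∈ Set.range v} := e1.trans e2
  refine ⟨e.extendSubtype, fun i => ?_⟩
  have hp : ((Fin.castLE h i : Fin N) : ℕ) < k := i.isLt
  rw [e.extendSubtype_apply_of_mem (Fin.castLE h i) hp]
  show ((e2 (e1 ⟨Fin.castLE h i, hp⟩)) : Fin N) = v i
  have h1 : e1 ⟨Fin.castLE h i, hp⟩ = i := Fin.ext rfl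
  rw [h1]
  rfl

lemma map_injective_eq_marginal {k N : ℕ} (h : k ≤ N) {γ : Measure (Fin N → Y)}
    (hγ : γ ∈ PsymSet N) {v : Fin k → Fin N} (hv : Function.Injective v) :
    γ.map (fun x i => x (v i)) = marginal h γ := by
  obtain ⟨σ, hσ⟩ := exists_perm_extend h hv
  have hcomp : (fun (x : Fin N → Y) (i : Fin k) => x (v i))
      = (fun (y : Fin N → Y) (i : Fin k) => y (Fin.castLE h i)) ∘ (fun x j => x (σ j)) := by
    funext x
    funext i
    simp only [Function.comp_apply, hσ i]
  rw [marginal]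
  conv_rhs => rw [← map_perm_of_mem_psym hγ σ]
  rw [Measure.map_map (measurable_pi_lambda _ fun i => measurable_pi_apply _)
    (measurable_permApply σ), ← hcomp]

end MeasHelpers

lemma empirical_pi_eq {Y : Type*} [MeasurableSpace Y] {k N : ℕ} (hN : 0 < N) (x : Fin N → Y) :
    (Measure.pi fun _ : Fin k => empirical N x)
      = ((N : ℝ≥0∞) ^ k)⁻¹ • ∑ v : Fin k → Fin N, Measure.dirac (fun i => x (v i)) := by
  haveI : IsProbabilityMeasure (empirical N x) := empirical_isProbabilityMeasure hN x
  apply Measure.pi_eq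
  intro s hs
  rw [Measure.smul_apply, Measure.finset_sum_apply]
  have hdirac : ∀ v : Fin k → Fin N,
      Measure.dirac (fun i => x (v i)) (Set.pi Set.univ s)
        = ∏ i : Fin k, Set.indicator (s i) (fun _ => (1 : ℝ≥0∞)) (x (v i)) := by
    intro v
    rw [Measure.dirac_apply' _ (MeasurableSet.univ_pi hs)]
    by_cases hvs : ∀ i, x (v i) ∈ s i
    · rw [Set.indicator_of_mem (by simpa using hvs)]
      rw [Finset.prod_congr rfl (fun i _ => Set.indicator_of_mem (hvs i) _)]
      simp
    · push_neg at hvs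
      obtain ⟨i0, hi0⟩ := hvs
      rw [Set.indicator_of_notMem (by simp only [Set.mem_univ_pi]; push_neg; exact ⟨i0, hi0⟩)]
      symm
      apply Finset.prod_eq_zero (Finset.mem_univ i0)
      simp [Set.indicator_of_notMem hi0]
  simp_rw [hdirac]
  have hswap : ∑ v : Fin k → Fin N, ∏ i : Fin k,
        Set.indicator (s i) (fun _ => (1 : ℝ≥0∞)) (x (v i))
      = ∏ i : Fin k, ∑ j : Fin N, Set.indicator (s i) (fun _ => (1 : ℝ≥0∞)) (x j) := by
    rw [Finset.prod_univ_sum]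
    rw [← Fintype.piFinset_univ]
  rw [hswap]
  have hemp : ∀ i : Fin k, empirical N x (s i)
      = (N : ℝ≥0∞)⁻¹ * ∑ j : Fin N, Set.indicator (s i) (fun _ => (1 : ℝ≥0∞)) (x j) := by
    intro i
    rw [empirical, Measure.smul_apply, Measure.finset_sum_apply, smul_eq_mul]
    congr 1
    exact Finset.sum_congr rfl fun j _ => Measure.dirac_apply' _ (hs i)
  simp_rw [hemp]
  rw [Finset.prod_mul_distrib, Finset.prod_const, smul_eq_mul, Finset.card_univ,
    Fintype.card_fin, ← ENNReal.inv_pow]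


section PM

variable {Y : Type*} [MeasurableSpace Y] [TopologicalSpace Y]

instance instBSPM [OpensMeasurableSpace Y] : BorelSpace (ProbabilityMeasure Y) := ⟨rfl⟩

lemma continuous_pm_lintegral [OpensMeasurableSpace Y] (f : Y →ᵇ ℝ≥0) :
    Continuous fun lam : ProbabilityMeasure Y => ∫⁻ y, f y ∂(lam : Measure Y) := by
  have heq : (fun lam : ProbabilityMeasure Y => ∫⁻ y, f y ∂(lam : Measure Y))
      = fun lam => ((lam.toFiniteMeasure.testAgainstNN f : ℝ≥0) : ℝ≥0∞) := by
    funext lam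
    rw [FiniteMeasure.testAgainstNN_coe_eq]
    rfl
  rw [heq]
  exact ENNReal.continuous_coe.comp (ProbabilityMeasure.continuous_testAgainstNN_eval f)

lemma measurable_pm_apply [BorelSpace Y] [HasOuterApproxClosed Y] {A : Set Y}
    (hA : MeasurableSet A) :
    Measurable fun lam : ProbabilityMeasure Y => (lam : Measure Y) A := by
  have h_eq : (inferInstance : MeasurableSpace Y)
      = MeasurableSpace.generateFrom {s : Set Y | IsClosed s} := by
    rw [BorelSpace.measurable_eq (α := Y), borel_eq_generateFrom_isClosed]
  have key : ∀ ⦃A : Set Y⦄, MeasurableSet A →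
      Measurable (fun lam : ProbabilityMeasure Y => (lam : Measure Y) A) := by
    refine MeasurableSpace.induction_on_inter h_eq isPiSystem_isClosed ?_ ?_ ?_ ?_
    · simpa using measurable_const
    · intro t ht
      have ht' : IsClosed t := ht
      apply ENNReal.measurable_of_tendsto
        (f := fun n (lam : ProbabilityMeasure Y) => ∫⁻ y, (ht'.apprSeq n y : ℝ≥0∞) ∂(lam : Measure Y))
      · intro n
        exact (continuous_pm_lintegral (ht'.apprSeq n)).measurable
      · rw [tendsto_pi_nhds]
        intro lam
        exact HasOuterApproxClosed.tendsto_lintegral_apprSeq ht' (lam : Measure Y)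
    · intro t htm ih
      have heq : (fun lam : ProbabilityMeasure Y => (lam : Measure Y) tᶜ)
          = fun lam : ProbabilityMeasure Y => 1 - (lam : Measure Y) t := by
        funext lam
        rw [measure_compl htm (measure_ne_top _ t), measure_univ]
      rw [heq]
      exact measurable_const.sub ih
    · intro f hdisj hfm ih
      have heq : (fun lam : ProbabilityMeasure Y => (lam : Measure Y) (⋃ n, f n))
          = fun lam : ProbabilityMeasure Y => ∑' n, (lam : Measure Y) (f n) := by
        funext lam
        exact measure_iUnion hdisj hfm
      rw [heq]
      exact Measurable.ennreal_tsum ih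
  exact key hA

lemma measurable_coe_pm [BorelSpace Y] [HasOuterApproxClosed Y] :
    Measurable fun lam : ProbabilityMeasure Y => (lam : Measure Y) :=
  Measure.measurable_of_measurable_coe _ fun _s hs => measurable_pm_apply hs

lemma measurable_pi_kernel [BorelSpace Y] [HasOuterApproxClosed Y] (n : ℕ) :
    Measurable fun lam : ProbabilityMeasure Y =>
      Measure.pi (fun _ : Fin n => (lam : Measure Y)) := by
  apply Measure.measurable_of_measurable_coe
  have h_eq : (inferInstance : MeasurableSpace (Fin n → Y)) = MeasurableSpace.generateFrom
      (Set.pi Set.univ '' Set.pi Set.univ fun _i : Fin n => { s : Set Y | MeasurableSet s }) :=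
    generateFrom_pi.symm
  have key : ∀ ⦃t : Set (Fin n → Y)⦄, MeasurableSet t →
      Measurable (fun lam : ProbabilityMeasure Y =>
        Measure.pi (fun _ : Fin n => (lam : Measure Y)) t) := by
    refine MeasurableSpace.induction_on_inter h_eq isPiSystem_pi ?_ ?_ ?_ ?_
    · simpa using measurable_const
    · rintro t ⟨s, hs, rfl⟩
      have hs' : ∀ i : Fin n, MeasurableSet (s i) := fun i => hs i (Set.mem_univ i)
      have heq : (fun lam : ProbabilityMeasure Y =>
            Measure.pi (fun _ : Fin n => (lam : Measure Y)) (Set.pi Set.univ s))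
          = fun lam : ProbabilityMeasure Y => ∏ i : Fin n, (lam : Measure Y) (s i) := by
        funext lam
        exact Measure.pi_pi _ _
      rw [heq]
      exact Finset.measurable_prod _ fun i _ => measurable_pm_apply (hs' i)
    · intro t htm ih
      have heq : (fun lam : ProbabilityMeasure Y =>
            Measure.pi (fun _ : Fin n => (lam : Measure Y)) tᶜ)
          = fun lam : ProbabilityMeasure Y => 1 - Measure.pi (fun _ : Fin n => (lam : Measure Y)) t := by
        funext lam
        rw [measure_compl htm (measure_ne_top _ t), measure_univ]
      rw [heq]
      exact measurable_const.sub ih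
    · intro f hdisj hfm ih
      have heq : (fun lam : ProbabilityMeasure Y =>
            Measure.pi (fun _ : Fin n => (lam : Measure Y)) (⋃ m, f m))
          = fun lam : ProbabilityMeasure Y => ∑' m, Measure.pi (fun _ : Fin n => (lam : Measure Y)) (f m) := by
        funext lam
        exact measure_iUnion hdisj hfm
      rw [heq]
      exact Measurable.ennreal_tsum ih
  exact fun s hs => key hs

end PM


section Integration

variable {W Z : Type*} [MeasurableSpace W] [MeasurableSpace Z]

lemma map_bind' {α : Measure W} {κ : W → Measure Z} (hκ : Measurable κ)
    {Z' : Type*} [MeasurableSpace Z'] {g : Z → Z'} (hg : Measurable g) :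
    (α.bind κ).map g = α.bind (fun w => (κ w).map g) := by
  ext t ht
  rw [Measure.map_apply hg ht, Measure.bind_apply (hg ht) hκ.aemeasurable,
    Measure.bind_apply ht (show Measurable fun w => (κ w).map g from
      (Measure.measurable_map g hg).comp hκ).aemeasurable]
  exact lintegral_congr fun w => (Measure.map_apply hg ht).symm

lemma isProbabilityMeasure_bind {α : Measure W} [IsProbabilityMeasure α] {κ : W → Measure Z}
    (hκ : Measurable κ) (h : ∀ w, IsProbabilityMeasure (κ w)) :
    IsProbabilityMeasure (α.bind κ) := by
  constructor
  rw [Measure.bind_apply MeasurableSet.univ hκ.aemeasurable]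
  have huniv : ∀ w, κ w Set.univ = 1 := fun w => (h w).measure_univ
  simp [huniv]

variable [TopologicalSpace Z] [OpensMeasurableSpace Z]

lemma measurable_integral_bcf (f : BoundedContinuousFunction Z ℝ) {g : W → Measure Z}
    (hg : Measurable g) (hp : ∀ w, IsProbabilityMeasure (g w)) :
    Measurable fun w => ∫ z, f z ∂(g w) := by
  have h1 : Measurable fun w => ∫⁻ z, ENNReal.ofReal (f z) ∂(g w) :=
    (Measure.measurable_lintegral
      (ENNReal.measurable_ofReal.comp f.continuous.measurable)).comp hg
  have h2 : Measurable fun w => ∫⁻ z, ENNReal.ofReal (-f z) ∂(g w) :=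
    (Measure.measurable_lintegral
      (ENNReal.measurable_ofReal.comp f.continuous.neg.measurable)).comp hg
  have heq : (fun w => ∫ z, f z ∂(g w))
      = fun w => (∫⁻ z, ENNReal.ofReal (f z) ∂(g w)).toReal
          - (∫⁻ z, ENNReal.ofReal (-f z) ∂(g w)).toReal := by
    funext w
    haveI := hp w
    exact integral_eq_lintegral_pos_part_sub_lintegral_neg_part (f.integrable (g w))
  rw [heq]
  exact (h1.ennreal_toReal).sub (h2.ennreal_toReal)

lemma lintegral_ofReal_bcf_le (f : BoundedContinuousFunction Z ℝ) (μ : Measure Z)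
    [IsProbabilityMeasure μ] :
    ∫⁻ z, ENNReal.ofReal (f z) ∂μ ≤ ENNReal.ofReal ‖f‖ := by
  calc ∫⁻ z, ENNReal.ofReal (f z) ∂μ ≤ ∫⁻ _z, ENNReal.ofReal ‖f‖ ∂μ := by
        apply lintegral_mono
        intro z
        refine ENNReal.ofReal_le_ofReal ((le_abs_self (f z)).trans ?_)
        rw [← Real.norm_eq_abs]
        exact f.norm_coe_le_norm z
    _ = ENNReal.ofReal ‖f‖ := by simp

lemma integral_bcf_bind (f : BoundedContinuousFunction Z ℝ) {α : Measure W}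
    [IsProbabilityMeasure α] {κ : W → Measure Z} (hκ : Measurable κ)
    (hp : ∀ w, IsProbabilityMeasure (κ w)) :
    ∫ z, f z ∂(α.bind κ) = ∫ w, (∫ z, f z ∂(κ w)) ∂α := by
  haveI : IsProbabilityMeasure (α.bind κ) := isProbabilityMeasure_bind hκ hp
  have hm1 : Measurable fun z => ENNReal.ofReal (f z) :=
    ENNReal.measurable_ofReal.comp f.continuous.measurable
  have hm2 : Measurable fun z => ENNReal.ofReal (-f z) :=
    ENNReal.measurable_ofReal.comp f.continuous.neg.measurable
  have hL1 : Measurable fun w => ∫⁻ z, ENNReal.ofReal (f z) ∂(κ w) :=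
    (Measure.measurable_lintegral hm1).comp hκ
  have hL2 : Measurable fun w => ∫⁻ z, ENNReal.ofReal (-f z) ∂(κ w) :=
    (Measure.measurable_lintegral hm2).comp hκ
  rw [integral_eq_lintegral_pos_part_sub_lintegral_neg_part (f.integrable _),
    Measure.lintegral_bind hκ.aemeasurable hm1.aemeasurable,
    Measure.lintegral_bind hκ.aemeasurable hm2.aemeasurable]
  have hfin1 : ∀ w, (∫⁻ z, ENNReal.ofReal (f z) ∂(κ w)) < ⊤ := by
    intro w
    haveI := hp w
    exact lt_of_le_of_lt (lintegral_ofReal_bcf_le f (κ w)) ENNReal.ofReal_lt_top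
  have hfin2 : ∀ w, (∫⁻ z, ENNReal.ofReal (-f z) ∂(κ w)) < ⊤ := by
    intro w
    haveI := hp w
    exact lt_of_le_of_lt (lintegral_ofReal_bcf_le (-f) (κ w)) ENNReal.ofReal_lt_top
  have heq : (fun w => ∫ z, f z ∂(κ w))
      = fun w => (∫⁻ z, ENNReal.ofReal (f z) ∂(κ w)).toReal
          - (∫⁻ z, ENNReal.ofReal (-f z) ∂(κ w)).toReal := by
    funext w
    haveI := hp w
    exact integral_eq_lintegral_pos_part_sub_lintegral_neg_part (f.integrable (κ w))
  rw [heq]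
  have hint1 : Integrable (fun w => (∫⁻ z, ENNReal.ofReal (f z) ∂(κ w)).toReal) α := by
    apply Integrable.mono' (integrable_const ‖f‖) hL1.ennreal_toReal.aestronglyMeasurable
    filter_upwards with w
    haveI := hp w
    rw [Real.norm_eq_abs, abs_of_nonneg ENNReal.toReal_nonneg]
    exact ENNReal.toReal_le_of_le_ofReal (norm_nonneg f) (lintegral_ofReal_bcf_le f (κ w))
  have hint2 : Integrable (fun w => (∫⁻ z, ENNReal.ofReal (-f z) ∂(κ w)).toReal) α := by
    apply Integrable.mono' (integrable_const ‖f‖) hL2.ennreal_toReal.aestronglyMeasurable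
    filter_upwards with w
    haveI := hp w
    rw [Real.norm_eq_abs, abs_of_nonneg ENNReal.toReal_nonneg]
    have := lintegral_ofReal_bcf_le (-f) (κ w)
    simpa using ENNReal.toReal_le_of_le_ofReal (by simpa using norm_nonneg (-f)) (by simpa using this)
  rw [integral_sub hint1 hint2,
    integral_toReal hL1.aemeasurable (Filter.Eventually.of_forall hfin1),
    integral_toReal hL2.aemeasurable (Filter.Eventually.of_forall hfin2)]

end Integration


section Emp

variable {Y : Type*} [MeasurableSpace Y] [TopologicalSpace Y] [OpensMeasurableSpace Y]

lemma lintegral_empirical {N : ℕ} (x : Fin N → Y) {f : Y → ℝ≥0∞} (hf : Measurable f) :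
    ∫⁻ y, f y ∂(empirical N x) = (N : ℝ≥0∞)⁻¹ * ∑ i, f (x i) := by
  rw [empirical, lintegral_smul_measure, lintegral_finset_sum_measure]
  simp [lintegral_dirac' _ hf]

lemma continuous_empPM {N : ℕ} (hN : 0 < N) :
    Continuous (fun x : Fin N → Y => empPM hN x) := by
  rw [continuous_iff_continuousAt]
  intro x0
  unfold ContinuousAt
  apply ProbabilityMeasure.tendsto_iff_forall_lintegral_tendsto.mpr
  intro f
  have hrep : ∀ x : Fin N → Y,
      ∫⁻ y, f y ∂((empPM hN x : ProbabilityMeasure Y) : Measure Y)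
        = (N : ℝ≥0∞)⁻¹ * ∑ i, (f (x i) : ℝ≥0∞) := by
    intro x
    exact lintegral_empirical x (measurable_coe_nnreal_ennreal.comp f.continuous.measurable)
  simp_rw [hrep]
  have hcont : Continuous fun x : Fin N → Y => (N : ℝ≥0∞)⁻¹ * ∑ i, (f (x i) : ℝ≥0∞) := by
    apply (ENNReal.continuous_const_mul ?_).comp
    · exact continuous_finset_sum _ fun i _ =>
        ENNReal.continuous_coe.comp (f.continuous.comp (continuous_apply i))
    · exact ENNReal.inv_ne_top.mpr (by exact_mod_cast hN.ne')
  exact hcont.tendsto x0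

end Emp

section Comb

lemma descFactorial_bound {k N : ℕ} (hk : 2 ≤ k) (hkN : k ≤ N) :
    (N : ℝ) ^ k - (N.descFactorial k : ℝ) ≤
      (∑ j ∈ Finset.Icc 1 (k - 1), ∑ s ∈ Finset.powersetCard j (Finset.Icc 1 (k - 1)),
        ∏ i ∈ s, (i : ℝ)) * (N : ℝ) ^ (k - 1) := by
  classical
  set n : ℝ := (N : ℝ) with hn
  have hN2 : 2 ≤ N := le_trans hk hkN
  have hn1 : (1 : ℝ) ≤ n := by
    rw [hn]
    exact_mod_cast le_trans one_le_two hN2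
  have hn0 : (0 : ℝ) ≤ n := le_trans zero_le_one hn1
  -- cast descFactorial
  have h1 : (N.descFactorial k : ℝ) = ∏ i ∈ Finset.range k, (n - (i : ℝ)) := by
    rw [Nat.descFactorial_eq_prod_range, Nat.cast_prod]
    refine Finset.prod_congr rfl fun i hi => ?_
    rw [Finset.mem_range] at hi
    rw [Nat.cast_sub (le_of_lt (lt_of_lt_of_le hi hkN))]
  -- expand
  have h2 : ∏ i ∈ Finset.range k, (n - (i : ℝ))
      = ∑ t ∈ (Finset.range k).powerset,
          (∏ i ∈ t, (-(i : ℝ))) * n ^ (k - t.card) := by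
    have := Finset.prod_add (fun i : ℕ => -(i : ℝ)) (fun _ : ℕ => n) (Finset.range k)
    simp only [neg_add_eq_sub] at this
    rw [this]
    refine Finset.sum_congr rfl fun t ht => ?_
    rw [Finset.mem_powerset] at ht
    rw [Finset.prod_const, Finset.card_sdiff_of_subset ht, Finset.card_range]
  have hmem : ∅ ∈ (Finset.range k).powerset := Finset.mem_powerset.mpr (Finset.empty_subset _)
  have h3 : ∏ i ∈ Finset.range k, (n - (i : ℝ))
      = (∑ t ∈ (Finset.range k).powerset \ {∅},
          (∏ i ∈ t, (-(i : ℝ))) * n ^ (k - t.card)) + n ^ k := by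
    rw [h2, Finset.sum_eq_sum_sdiff_singleton_add hmem
      (fun t => (∏ i ∈ t, (-(i : ℝ))) * n ^ (k - t.card))]
    simp
  -- so
  have h4 : n ^ k - (N.descFactorial k : ℝ)
      = -∑ t ∈ (Finset.range k).powerset \ {∅},
          (∏ i ∈ t, (-(i : ℝ))) * n ^ (k - t.card) := by
    rw [h1, h3]
    ring
  rw [h4]
  have h5 : -∑ t ∈ (Finset.range k).powerset \ {∅},
        (∏ i ∈ t, (-(i : ℝ))) * n ^ (k - t.card)
      ≤ ∑ t ∈ (Finset.range k).powerset \ {∅}, (∏ i ∈ t, (i : ℝ)) * n ^ (k - 1) := by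
    rw [← Finset.sum_neg_distrib]
    refine Finset.sum_le_sum fun t ht => ?_
    rw [Finset.mem_sdiff, Finset.mem_powerset, Finset.notMem_singleton] at ht
    have hcard : 1 ≤ t.card := Finset.card_pos.mpr (Finset.nonempty_of_ne_empty ht.2)
    have habs : -((∏ i ∈ t, (-(i : ℝ))) * n ^ (k - t.card))
        ≤ |(∏ i ∈ t, (-(i : ℝ))) * n ^ (k - t.card)| := neg_le_abs _
    refine habs.trans ?_
    rw [abs_mul, Finset.abs_prod]
    have h6 : ∀ i ∈ t, |(-(i : ℝ))| = (i : ℝ) := fun i _ => by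
      rw [abs_neg, abs_of_nonneg (Nat.cast_nonneg i)]
    rw [Finset.prod_congr rfl h6, abs_of_nonneg (pow_nonneg hn0 _)]
    refine mul_le_mul_of_nonneg_left ?_ (Finset.prod_nonneg fun i _ => Nat.cast_nonneg i)
    exact pow_le_pow_right₀ hn1 (by omega)
  refine h5.trans ?_
  rw [← Finset.sum_mul]
  refine mul_le_mul_of_nonneg_right (le_of_eq ?_) (pow_nonneg hn0 _)
  -- Claim A: restrict to subsets of Icc 1 (k-1)
  have hsub : (Finset.Icc 1 (k - 1)).powerset \ {∅} ⊆ (Finset.range k).powerset \ {∅} := by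
    intro t ht
    rw [Finset.mem_sdiff, Finset.mem_powerset] at ht ⊢
    refine ⟨ht.1.trans ?_, ht.2⟩
    intro i hi
    rw [Finset.mem_Icc] at hi
    rw [Finset.mem_range]
    omega
  have hA : ∑ t ∈ (Finset.range k).powerset \ {∅}, (∏ i ∈ t, (i : ℝ))
      = ∑ t ∈ (Finset.Icc 1 (k - 1)).powerset \ {∅}, (∏ i ∈ t, (i : ℝ)) := by
    symm
    refine Finset.sum_subset hsub fun t ht hnt => ?_
    rw [Finset.mem_sdiff, Finset.mem_powerset, Finset.notMem_singleton] at ht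
    have h0t : (0 : ℕ) ∈ t := by
      by_contra h0
      apply hnt
      rw [Finset.mem_sdiff, Finset.mem_powerset, Finset.notMem_singleton]
      refine ⟨fun i hi => ?_, ht.2⟩
      have := ht.1 hi
      rw [Finset.mem_range] at this
      rw [Finset.mem_Icc]
      have : i ≠ 0 := fun h => h0 (h ▸ hi)
      omega
    exact Finset.prod_eq_zero h0t (by norm_num)
  rw [hA]
  -- Claim B
  have hcard : (Finset.Icc 1 (k - 1)).card = k - 1 := by
    rw [Nat.card_Icc]
    omega
  -- Claim B : sum over nonempty subsets equals the double sum
  have hmem' : ∅ ∈ (Finset.Icc 1 (k - 1)).powerset :=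
    Finset.mem_powerset.mpr (Finset.empty_subset _)
  have hB0 : ∑ t ∈ (Finset.Icc 1 (k - 1)).powerset, (∏ i ∈ t, (i : ℝ))
      = (∑ t ∈ (Finset.Icc 1 (k - 1)).powerset \ {∅}, ∏ i ∈ t, (i : ℝ)) + 1 := by
    rw [Finset.sum_eq_sum_sdiff_singleton_add hmem' (fun t => ∏ i ∈ t, (i : ℝ))]
    simp
  have hB1 : ∑ t ∈ (Finset.Icc 1 (k - 1)).powerset, (∏ i ∈ t, (i : ℝ))
      = ∑ j ∈ Finset.range (k - 1 + 1), ∑ t ∈ Finset.powersetCard j (Finset.Icc 1 (k - 1)),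
          ∏ i ∈ t, (i : ℝ) := by
    rw [Finset.sum_powerset, hcard]
  have hzero : (0 : ℕ) ∈ Finset.range (k - 1 + 1) := by
    rw [Finset.mem_range]
    omega
  have hrange : Finset.range (k - 1 + 1) \ {0} = Finset.Icc 1 (k - 1) := by
    ext j
    simp only [Finset.mem_sdiff, Finset.mem_range, Finset.mem_singleton, Finset.mem_Icc]
    omega
  have hB2 : ∑ j ∈ Finset.range (k - 1 + 1), ∑ t ∈ Finset.powersetCard j (Finset.Icc 1 (k - 1)),
        ∏ i ∈ t, (i : ℝ)
      = (∑ j ∈ Finset.Icc 1 (k - 1), ∑ t ∈ Finset.powersetCard j (Finset.Icc 1 (k - 1)),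
          ∏ i ∈ t, (i : ℝ)) + 1 := by
    rw [Finset.sum_eq_sum_sdiff_singleton_add hzero, hrange]
    simp [Finset.powersetCard_zero]
  have := hB0.symm.trans (hB1.trans hB2)
  linarith

end Comb

/-- multi-marginal optimal transport bounds. Let `Φ` be a bounded
continuous symmetric `k`-body interaction, `C_{N,k}(ρ)` the symmetric MMOT value with
one-point marginal `ρ`, `P_k(λ) = ∫ Φ dλ^{⊗k}` and `P_k^{**}` its convexification over
mixtures with barycenter `ρ`. Then
`((N−k)! N^k/N!) (P_k^{**}(ρ) − C_k ‖Φ‖_∞/N) ≤ C_{N,k}(ρ) ≤ P_k^{**}(ρ)` for every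
`ρ ∈ 𝒫(X)`, where `C_k = ∑_{j=1}^{k−1} ∑_{1≤i_1<⋯<i_j≤k−1} i_1⋯i_j` depends only on `k`. -/
theorem mmot_bounds
    {X : Type*} [MeasurableSpace X] [TopologicalSpace X] [PolishSpace X] [BorelSpace X]
    {k N : ℕ} (hk : 2 ≤ k) (hkN : k ≤ N)
    (Φ : BoundedContinuousFunction (Fin k → X) ℝ)
    (hΦsym : ∀ (σ : Equiv.Perm (Fin k)) (z : Fin k → X), Φ (fun i => z (σ i)) = Φ z)
    (ρ : Measure X) (hρ : IsProbabilityMeasure ρ) :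
    let hk0 : 0 < k := lt_of_lt_of_le two_pos hk
    let CNk : ℝ := sInf {r : ℝ | ∃ μk ∈ NRep (X := X) hkN,
      margOne hk0 μk = ρ ∧ r = ∫ y, Φ y ∂μk}
    let Pk : ProbabilityMeasure X → ℝ :=
      fun lam => ∫ y, Φ y ∂(Measure.pi fun _ : Fin k => (lam : Measure X))
    let Pkss : ℝ := sInf {r : ℝ | ∃ α : Measure (ProbabilityMeasure X),
      IsProbabilityMeasure α ∧
      (∀ A : Set X, MeasurableSet A → ∫⁻ lam, (lam : Measure X) A ∂α = ρ A) ∧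
      r = ∫ lam, Pk lam ∂α}
    let Ck : ℝ := ∑ j ∈ Finset.Icc 1 (k - 1),
      ∑ s ∈ Finset.powersetCard j (Finset.Icc 1 (k - 1)), ∏ i ∈ s, (i : ℝ)
    ((N - k).factorial : ℝ) * (N : ℝ) ^ k / (N.factorial : ℝ) * (Pkss - Ck * ‖Φ‖ / N) ≤ CNk
      ∧ CNk ≤ Pkss := by
  intro hk0 CNk Pk Pkss Ck
  have hN0 : 0 < N := lt_of_lt_of_le hk0 hkN
  haveI hρI : IsProbabilityMeasure ρ := hρ
  classical
  set S1 : Set ℝ := {r : ℝ | ∃ μk ∈ NRep (X := X) hkN,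
      margOne hk0 μk = ρ ∧ r = ∫ y, Φ y ∂μk} with hS1def
  set S2 : Set ℝ := {r : ℝ | ∃ α : Measure (ProbabilityMeasure X),
      IsProbabilityMeasure α ∧
      (∀ A : Set X, MeasurableSet A → ∫⁻ lam, (lam : Measure X) A ∂α = ρ A) ∧
      r = ∫ lam, Pk lam ∂α} with hS2def
  have hCNk : CNk = sInf S1 := rfl
  have hPkss : Pkss = sInf S2 := rfl
  have hPkm : Measurable Pk :=
    measurable_integral_bcf Φ (measurable_pi_kernel k) (fun _lam => inferInstance)
  have hPkbd : ∀ lam : ProbabilityMeasure X, |Pk lam| ≤ ‖Φ‖ := by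
    intro lam
    rw [← Real.norm_eq_abs]
    exact Φ.norm_integral_le_norm (μ := Measure.pi fun _ : Fin k => (lam : Measure X))
  -- Step A : mixtures give elements of S1
  have hmix : ∀ α : Measure (ProbabilityMeasure X), IsProbabilityMeasure α →
      (∀ A : Set X, MeasurableSet A → ∫⁻ lam, (lam : Measure X) A ∂α = ρ A) →
      (∫ lam, Pk lam ∂α) ∈ S1 := by
    intro α hα hbar
    haveI := hα
    set κN : ProbabilityMeasure X → Measure (Fin N → X) :=
      fun lam => Measure.pi (fun _ : Fin N => (lam : Measure X)) with hκNdef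
    have hκNm : Measurable κN := measurable_pi_kernel N
    have hκNp : ∀ lam, IsProbabilityMeasure (κN lam) := fun _lam => inferInstance
    set γ : Measure (Fin N → X) := α.bind κN with hγdef
    haveI hγp : IsProbabilityMeasure γ := isProbabilityMeasure_bind hκNm hκNp
    have hγsym : γ = symmetrize N γ := by
      symm
      apply symmetrize_eq_self
      intro σ
      rw [hγdef, map_bind' hκNm (measurable_permApply σ)]
      congr 1
      funext lam
      exact map_comp_perm _ σ
    have hγmem : γ ∈ PsymSet N := ⟨hγp, hγsym⟩
    set μk : Measure (Fin k → X) := marginal hkN γ with hμkdef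
    have hκkm : Measurable (fun lam : ProbabilityMeasure X =>
        Measure.pi (fun _ : Fin k => (lam : Measure X))) := measurable_pi_kernel k
    have hmarg : μk = α.bind (fun lam => Measure.pi (fun _ : Fin k => (lam : Measure X))) := by
      rw [hμkdef, marginal, hγdef,
        map_bind' hκNm (measurable_pi_lambda _ fun i => measurable_pi_apply _)]
      congr 1
      funext lam
      exact pi_map_castLE _ hkN
    have hmargOne : margOne hk0 μk = ρ := by
      rw [margOne, hmarg, map_bind' hκkm (measurable_pi_apply _)]
      have heval : (fun lam : ProbabilityMeasure X =>
            (Measure.pi fun _ : Fin k => (lam : Measure X)).map (fun f => f ⟨0, hk0⟩))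
          = fun lam : ProbabilityMeasure X => (lam : Measure X) := by
        funext lam
        exact pi_map_eval _ _
      rw [heval]
      ext A hA
      rw [Measure.bind_apply hA measurable_coe_pm.aemeasurable]
      exact hbar A hA
    refine ⟨μk, ⟨γ, hγmem, rfl⟩, hmargOne, ?_⟩
    rw [hmarg]
    exact (integral_bcf_bind Φ hκkm (fun _lam => inferInstance)).symm
  have hsub : S2 ⊆ S1 := by
    rintro r ⟨α, hα, hbar, rfl⟩
    exact hmix α hα hbar
  -- S2 is nonempty (dirac at ρ)
  have hδmem : (Pk (⟨ρ, hρI⟩ : ProbabilityMeasure X)) ∈ S2 := by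
    refine ⟨Measure.dirac (⟨ρ, hρI⟩ : ProbabilityMeasure X), Measure.dirac.isProbabilityMeasure, ?_, ?_⟩
    · intro A hA
      exact (lintegral_dirac' _ (measurable_pm_apply hA)).trans rfl
    · exact (integral_dirac' _ _ hPkm.stronglyMeasurable).symm
  have hS2ne : S2.Nonempty := ⟨_, hδmem⟩
  have hS1ne : S1.Nonempty := ⟨_, hsub hδmem⟩
  -- S1 is bounded below
  have hS1bdd : ∀ r ∈ S1, -‖Φ‖ ≤ r := by
    rintro r ⟨μk, ⟨γ, hγmem, hμkeq⟩, _hmarg, rfl⟩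
    haveI := hγmem.1
    haveI : IsProbabilityMeasure μk := by
      rw [hμkeq, marginal]
      exact Measure.isProbabilityMeasure_map
        (measurable_pi_lambda _ fun i => measurable_pi_apply _).aemeasurable
    have := Φ.norm_integral_le_norm (μ := μk)
    rw [Real.norm_eq_abs, abs_le] at this
    exact this.1
  have hbdd1 : BddBelow S1 := ⟨-‖Φ‖, fun r hr => hS1bdd r hr⟩
  have hbdd2 : BddBelow S2 := hbdd1.mono hsub
  -- upper bound
  have hupper : CNk ≤ Pkss := csInf_le_csInf hbdd1 hS2ne hsub
  refine ⟨?_, hupper⟩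
  -- lower bound
  rw [hCNk]
  apply le_csInf hS1ne
  rintro r ⟨μk, ⟨γ, hγmem, hμkeq⟩, hmargOne, rfl⟩
  haveI hγp : IsProbabilityMeasure γ := hγmem.1
  set j0 : Fin N := Fin.castLE hkN ⟨0, hk0⟩ with hj0def
  -- all one-point marginals of γ equal ρ
  have hmapev : ∀ i : Fin N, γ.map (fun x => x i) = ρ := by
    intro i
    have hswap : (fun x : Fin N → X => x i)
        = (fun x : Fin N → X => x j0) ∘ (fun x j => x ((Equiv.swap j0 i) j)) := by
      funext x
      simp [Function.comp_apply, Equiv.swap_apply_left]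
    have h1 : γ.map (fun x => x i) = γ.map (fun x => x j0) := by
      rw [hswap, ← Measure.map_map (measurable_pi_apply j0)
        (measurable_permApply (Equiv.swap j0 i)), map_perm_of_mem_psym hγmem]
    rw [h1]
    have h2 : γ.map (fun x : Fin N → X => x j0) = margOne hk0 μk := by
      have hmm := Measure.map_map (μ := γ)
        (f := fun x (i : Fin k) => x (Fin.castLE hkN i))
        (g := fun f : Fin k → X => f ⟨0, hk0⟩)
        (measurable_pi_apply _) (measurable_pi_lambda _ fun i => measurable_pi_apply _)
      rw [hμkeq]
      show γ.map (fun x : Fin N → X => x j0)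
          = (γ.map fun x (i : Fin k) => x (Fin.castLE hkN i)).map (fun f => f ⟨0, hk0⟩)
      rw [hmm]
      rfl
    rw [h2, hmargOne]
  -- the pushforward of γ under the empirical map
  have hempm : Measurable (fun x : Fin N → X => empPM hN0 x) :=
    (continuous_empPM hN0).measurable
  set α : Measure (ProbabilityMeasure X) := γ.map (empPM hN0) with hαdef
  haveI hαp : IsProbabilityMeasure α := Measure.isProbabilityMeasure_map hempm.aemeasurable
  have hbar : ∀ A : Set X, MeasurableSet A → ∫⁻ lam, (lam : Measure X) A ∂α = ρ A := by
    intro A hA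
    rw [hαdef, lintegral_map (measurable_pm_apply hA) hempm]
    have hemp : ∀ x : Fin N → X, ((empPM hN0 x : ProbabilityMeasure X) : Measure X) A
        = (N : ℝ≥0∞)⁻¹ * ∑ i, Set.indicator A (1 : X → ℝ≥0∞) (x i) := by
      intro x
      show empirical N x A = _
      rw [empirical, Measure.smul_apply, Measure.finset_sum_apply, smul_eq_mul]
      congr 1
      exact Finset.sum_congr rfl fun i _ => Measure.dirac_apply' _ hA
    simp_rw [hemp]
    have hmeas_i : ∀ i : Fin N,
        Measurable fun x : Fin N → X => Set.indicator A (1 : X → ℝ≥0∞) (x i) :=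
      fun i => (measurable_one.indicator hA).comp (measurable_pi_apply i)
    rw [lintegral_const_mul _ (Finset.measurable_sum _ fun i _ => hmeas_i i),
      lintegral_finset_sum _ (fun i _ => hmeas_i i)]
    have hterm : ∀ i : Fin N,
        ∫⁻ x, Set.indicator A (1 : X → ℝ≥0∞) (x i) ∂γ = ρ A := by
      intro i
      rw [← lintegral_map (measurable_one.indicator hA) (measurable_pi_apply i), hmapev i,
        lintegral_indicator hA]
      simp
    simp_rw [hterm]
    rw [Finset.sum_const, Finset.card_univ, Fintype.card_fin,
      ← Nat.cast_smul_eq_nsmul (R := ℝ≥0∞), smul_eq_mul, ← mul_assoc,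
      ENNReal.inv_mul_cancel (by exact_mod_cast hN0.ne') (natCast_ne_top N), one_mul]
  have hmem2 : (∫ lam, Pk lam ∂α) ∈ S2 := ⟨α, hαp, hbar, rfl⟩
  have hPkss_le : Pkss ≤ ∫ lam, Pk lam ∂α := by
    rw [hPkss]
    exact csInf_le hbdd2 hmem2
  -- compute ∫ Pk dα
  have hpull : ∫ lam, Pk lam ∂α = ∫ x, Pk (empPM hN0 x) ∂γ := by
    rw [hαdef]
    exact integral_map hempm.aemeasurable hPkm.stronglyMeasurable.aestronglyMeasurable
  have hptwise : ∀ x : Fin N → X, Pk (empPM hN0 x)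
      = ((N : ℝ) ^ k)⁻¹ * ∑ v : Fin k → Fin N, Φ (fun i => x (v i)) := by
    intro x
    show (∫ y, Φ y ∂(Measure.pi fun _ : Fin k => empirical N x)) = _
    rw [empirical_pi_eq hN0 x, integral_smul_measure,
      integral_finset_sum_measure (fun v _ => Φ.integrable _)]
    have hd : ∀ v : Fin k → Fin N,
        ∫ y, Φ y ∂(Measure.dirac fun i => x (v i)) = Φ (fun i => x (v i)) := by
      intro v
      exact integral_dirac' _ _ Φ.continuous.measurable.stronglyMeasurable
    simp_rw [hd]
    rw [smul_eq_mul]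
    congr 1
    simp [ENNReal.toReal_inv, ENNReal.toReal_pow]
  -- the composed bounded continuous functions
  have hΦv_int : ∀ v : Fin k → Fin N, Integrable (fun x : Fin N → X => Φ (fun i => x (v i))) γ := by
    intro v
    have hcont : Continuous fun x : Fin N → X => (fun i => x (v i)) :=
      continuous_pi fun i => continuous_apply (v i)
    exact (Φ.compContinuous ⟨_, hcont⟩).integrable γ
  have hΦv_bd : ∀ v : Fin k → Fin N, |∫ x, Φ (fun i => x (v i)) ∂γ| ≤ ‖Φ‖ := by
    intro v
    have hcont : Continuous fun x : Fin N → X => (fun i => x (v i)) :=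
      continuous_pi fun i => continuous_apply (v i)
    have h1 := (Φ.compContinuous ⟨_, hcont⟩).norm_integral_le_norm (μ := γ)
    rw [Real.norm_eq_abs] at h1
    exact h1.trans (Φ.norm_compContinuous_le _)
  have hΦv_inj : ∀ v : Fin k → Fin N, Function.Injective v →
      ∫ x, Φ (fun i => x (v i)) ∂γ = ∫ y, Φ y ∂μk := by
    intro v hv
    rw [hμkeq, ← map_injective_eq_marginal hkN hγmem hv,
      integral_map (measurable_pi_lambda _ fun i => measurable_pi_apply (v i)).aemeasurable
        Φ.continuous.measurable.stronglyMeasurable.aestronglyMeasurable]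
  have hswapint : ∫ x, Pk (empPM hN0 x) ∂γ
      = ((N : ℝ) ^ k)⁻¹ * ∑ v : Fin k → Fin N, ∫ x, Φ (fun i => x (v i)) ∂γ := by
    simp_rw [hptwise]
    rw [integral_const_mul, integral_finset_sum _ (fun v _ => hΦv_int v)]
  -- split the sum
  have hcardP : (Finset.univ.filter (fun v : Fin k → Fin N => Function.Injective v)).card
      = N.descFactorial k := by
    rw [← Fintype.card_subtype]
    rw [Fintype.card_congr (Equiv.subtypeInjectiveEquivEmbedding (Fin k) (Fin N)),
      Fintype.card_embedding_eq]
    simp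
  have hsumsplit : ∑ v : Fin k → Fin N, ∫ x, Φ (fun i => x (v i)) ∂γ
      = (N.descFactorial k : ℝ) * (∫ y, Φ y ∂μk)
        + ∑ v ∈ Finset.univ.filter (fun v => ¬ Function.Injective v),
            ∫ x, Φ (fun i => x (v i)) ∂γ := by
    rw [← Finset.sum_filter_add_sum_filter_not Finset.univ (fun v => Function.Injective v)]
    congr 1
    rw [Finset.sum_congr rfl (fun v hv => hΦv_inj v (Finset.mem_filter.mp hv).2),
      Finset.sum_const, hcardP, nsmul_eq_mul]
  set R : ℝ := ∑ v ∈ Finset.univ.filter (fun v : Fin k → Fin N => ¬ Function.Injective v),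
      ∫ x, Φ (fun i => x (v i)) ∂γ with hRdef
  have hcardNI : (Finset.univ.filter (fun v : Fin k → Fin N => ¬ Function.Injective v)).card
      = N ^ k - N.descFactorial k := by
    have htot := Finset.card_filter_add_card_filter_not
      (s := (Finset.univ : Finset (Fin k → Fin N))) (p := fun v => Function.Injective v)
    rw [hcardP] at htot
    have hcu : (Finset.univ : Finset (Fin k → Fin N)).card = N ^ k := by
      rw [Finset.card_univ, Fintype.card_fun]
      simp
    omega
  have hRbd : |R| ≤ ((N : ℝ) ^ k - (N.descFactorial k : ℝ)) * ‖Φ‖ := by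
    rw [hRdef]
    refine (Finset.abs_sum_le_sum_abs _ _).trans ?_
    refine (Finset.sum_le_sum fun v _ => hΦv_bd v).trans ?_
    rw [Finset.sum_const, hcardNI, nsmul_eq_mul]
    have hle : N.descFactorial k ≤ N ^ k := Nat.descFactorial_le_pow N k
    rw [Nat.cast_sub hle]
    push_cast
    exact le_rfl
  -- final algebra
  set n : ℝ := (N : ℝ) with hndef
  set D : ℝ := (N.descFactorial k : ℝ) with hDdef
  set F : ℝ := ‖Φ‖ with hFdef
  set I : ℝ := ∫ y, Φ y ∂μk with hIdef
  have hn0 : (0 : ℝ) < n := by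
    rw [hndef]
    exact_mod_cast hN0
  have hnk0 : (0 : ℝ) < n ^ k := pow_pos hn0 k
  have hD0 : (0 : ℝ) < D := by
    rw [hDdef]
    have hne : N.descFactorial k ≠ 0 := by
      intro h
      rw [Nat.descFactorial_eq_zero_iff_lt] at h
      omega
    exact_mod_cast Nat.pos_of_ne_zero hne
  have hF0 : (0 : ℝ) ≤ F := norm_nonneg Φ
  have hfact : ((N - k).factorial : ℝ) * D = (N.factorial : ℝ) := by
    rw [hDdef]
    exact_mod_cast congrArg (Nat.cast : ℕ → ℝ) (Nat.factorial_mul_descFactorial hkN)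
  have hcomb : n ^ k - D ≤ Ck * n ^ (k - 1) := descFactorial_bound hk hkN
  have hpow : n ^ (k - 1) * n = n ^ k := by
    rw [← pow_succ]
    congr 1
    omega
  have hPle : Pkss ≤ (n ^ k)⁻¹ * (D * I + R) := by
    calc Pkss ≤ ∫ lam, Pk lam ∂α := hPkss_le
      _ = (n ^ k)⁻¹ * (D * I + R) := by rw [hpull, hswapint, hsumsplit]
  have hRle : R ≤ (n ^ k - D) * F := (abs_le.mp hRbd).2
  have e2 : (n ^ k - D) * F ≤ Ck * n ^ (k - 1) * F := mul_le_mul_of_nonneg_right hcomb hF0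
  have e3 : (n ^ k)⁻¹ * (Ck * n ^ (k - 1) * F) = Ck * F / n := by
    rw [← hpow]
    field_simp
  have hc : (n ^ k)⁻¹ * R ≤ (n ^ k)⁻¹ * ((n ^ k - D) * F) :=
    mul_le_mul_of_nonneg_left hRle (inv_nonneg.mpr hnk0.le)
  have hc2 : (n ^ k)⁻¹ * ((n ^ k - D) * F) ≤ (n ^ k)⁻¹ * (Ck * n ^ (k - 1) * F) :=
    mul_le_mul_of_nonneg_left e2 (inv_nonneg.mpr hnk0.le)
  have hexp : (n ^ k)⁻¹ * (D * I + R) = D / n ^ k * I + (n ^ k)⁻¹ * R := by ring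
  have h1 : Pkss - Ck * F / n ≤ D / n ^ k * I := by linarith
  have hcoef : ((N - k).factorial : ℝ) * n ^ k / (N.factorial : ℝ) = n ^ k / D := by
    rw [← hfact, mul_div_mul_left _ _ (by positivity : ((N - k).factorial : ℝ) ≠ 0)]
  rw [hcoef]
  have h2 : n ^ k / D * (Pkss - Ck * F / n) ≤ n ^ k / D * (D / n ^ k * I) :=
    mul_le_mul_of_nonneg_left h1 (by positivity)
  have h3 : n ^ k / D * (D / n ^ k * I) = I := by
    field_simp
  linarith


end FiniteDeFinetti
end
end
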